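/- arXiv:2203.09021 — 5 statements merged into one kernel-verified Lean document; each statement's English description precedes it below -/
import Mathlib

section
/- For every δ : Fin n → ℝ, if K and γ are symmetric (K i j = K j i and γ i j = γ j i for all i, j), then f(δ) = −( Z·((sin δ) ⊗ (cos δ)) + Ψ·((cos δ) ⊗ (cos δ)) + Ψ·((sin δ) ⊗ (sin δ)) ), i.e. the trigonometric coupling nonlinearity of the power network is exactly represented as a quadratic form in the lifted variables sin δ and cos δ. -/
open Matrix

noncomputable section

/-- Kronecker product of two vectors in `Fin n → ℝ`. -/
def kron {n : ℕ} (a b : Fin n → ℝ) : Fin n × Fin n → ℝ := fun p => a p.1 * b p.2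

/-- The matrix `Z` of the lifted quadratic representation. -/
def Zmat {n : ℕ} (K γ : Fin n → Fin n → ℝ) : Matrix (Fin n) (Fin n × Fin n) ℝ :=
  Matrix.of fun i kj =>
    if i = kj.2 ∧ kj.2 ≠ kj.1 then K kj.1 kj.2 * Real.cos (γ kj.1 kj.2)
    else if i = kj.1 ∧ kj.2 ≠ kj.1 then -(K kj.1 kj.2 * Real.cos (γ kj.1 kj.2))
    else 0

/-- The matrix `Ψ` of the lifted quadratic representation. -/
def Psimat {n : ℕ} (K γ : Fin n → Fin n → ℝ) : Matrix (Fin n) (Fin n × Fin n) ℝ :=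
  Matrix.of fun i kj =>
    if (i = kj.2 ∧ kj.2 ≠ kj.1) ∨ (i = kj.1 ∧ kj.2 ≠ kj.1)
    then (1/2 : ℝ) * K kj.1 kj.2 * Real.sin (γ kj.1 kj.2) else 0

/-- The trigonometric coupling nonlinearity of the power network. -/
def powf {n : ℕ} (K γ : Fin n → Fin n → ℝ) (δ : Fin n → ℝ) : Fin n → ℝ :=
  fun i => ∑ j ∈ Finset.univ.filter (fun j => j ≠ i), K i j * Real.sin (δ i - δ j - γ i j)


open Finset in
lemma pair_sum {n : ℕ} (i : Fin n) (A B : Fin n → Fin n → ℝ) :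
    ∑ p : Fin n × Fin n,
      (if i = p.2 ∧ p.2 ≠ p.1 then A p.1 p.2
       else if i = p.1 ∧ p.2 ≠ p.1 then B p.1 p.2 else 0)
    = ∑ k ∈ Finset.univ.filter (fun k => k ≠ i), A k i
      + ∑ j ∈ Finset.univ.filter (fun j => j ≠ i), B i j := by
  rw [Fintype.sum_prod_type]
  have h : ∀ k : Fin n,
      (∑ j : Fin n, (if i = j ∧ j ≠ k then A k j
        else if i = k ∧ j ≠ k then B k j else 0))
      = (if k = i then ∑ j ∈ Finset.univ.filter (fun j => j ≠ i), B i j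
         else A k i) := by
    intro k
    by_cases hk : k = i
    · subst hk
      rw [if_pos rfl, Finset.sum_filter]
      refine Finset.sum_congr rfl fun j _ => ?_
      by_cases hj : j = k
      · simp [hj]
      · simp [hj, Ne.symm hj]
    · rw [if_neg hk]
      have : ∀ j : Fin n, (if i = j ∧ j ≠ k then A k j
          else if i = k ∧ j ≠ k then B k j else 0)
          = if j = i then A k i else 0 := by
        intro j
        by_cases hj : j = i
        · subst hj
          simp [Ne.symm hk, fun h : j = k => hk h.symm]
        · have h1 : ¬ (i = j) := fun h => hj h.symm
          have h2 : ¬ (i = k) := fun h => hk h.symm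
          simp [h1, h2, hj]
      rw [Finset.sum_congr rfl fun j _ => this j]
      simp
  rw [Finset.sum_congr rfl fun k _ => h k]
  rw [Finset.sum_ite, Finset.sum_const]
  have : Finset.univ.filter (fun k : Fin n => k = i) = {i} := by
    ext x; simp
  rw [this]
  simp [Finset.filter_ne', Finset.filter_ne, add_comm, Finset.sum_filter]

lemma or_ite_split (P Q : Prop) [Decidable P] [Decidable Q] (c : ℝ) :
    (if P ∨ Q then c else 0) = if P then c else if Q then c else 0 := by
  by_cases hP : P <;> by_cases hQ : Q <;> simp [hP, hQ]

/-- the trigonometric coupling nonlinearity is exactly the quadratic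
form in the lifted variables `sin δ` and `cos δ`. -/
theorem quadratic_representation_of_f (n : ℕ) (hn : 1 ≤ n)
    (K γ : Fin n → Fin n → ℝ)
    (hK : ∀ i j, K i j = K j i) (hγ : ∀ i j, γ i j = γ j i)
    (δ : Fin n → ℝ) :
    powf K γ δ =
      -((Zmat K γ).mulVec (kron (fun i => Real.sin (δ i)) (fun i => Real.cos (δ i)))
        + (Psimat K γ).mulVec (kron (fun i => Real.cos (δ i)) (fun i => Real.cos (δ i)))
        + (Psimat K γ).mulVec (kron (fun i => Real.sin (δ i)) (fun i => Real.sin (δ i)))) := by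
  funext i
  simp only [powf, Pi.neg_apply, Pi.add_apply, mulVec, dotProduct, Zmat, Psimat, kron,
    Matrix.of_apply, or_ite_split, ite_mul, zero_mul, neg_mul]
  rw [pair_sum i (fun k j => K k j * Real.cos (γ k j) * (Real.sin (δ k) * Real.cos (δ j)))
        (fun k j => -(K k j * Real.cos (γ k j) * (Real.sin (δ k) * Real.cos (δ j)))),
      pair_sum i (fun k j => 1/2 * K k j * Real.sin (γ k j) * (Real.cos (δ k) * Real.cos (δ j)))
        (fun k j => 1/2 * K k j * Real.sin (γ k j) * (Real.cos (δ k) * Real.cos (δ j))),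
      pair_sum i (fun k j => 1/2 * K k j * Real.sin (γ k j) * (Real.sin (δ k) * Real.sin (δ j)))
        (fun k j => 1/2 * K k j * Real.sin (γ k j) * (Real.sin (δ k) * Real.sin (δ j)))]
  rw [← Finset.sum_add_distrib, ← Finset.sum_add_distrib, ← Finset.sum_add_distrib,
      ← Finset.sum_add_distrib, ← Finset.sum_add_distrib, ← Finset.sum_neg_distrib]
  refine Finset.sum_congr rfl fun j hj => ?_
  rw [hK j i, hγ j i, Real.sin_sub (δ i - δ j) (γ i j), Real.sin_sub, Real.cos_sub]
  ring
end
end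

section
/- Exact quadratic lifting of trajectories (Lemma 1): Suppose K and γ are symmetric (K i j = K j i, γ i j = γ j i). Let δ, v, a : ℝ → (Fin n → ℝ) and u : ℝ → ℝ be such that for every t, δ has derivative v(t) at t, v has derivative a(t) at t, and M·a(t) + D·v(t) + f(δ(t)) = u(t) • ℬ. Set q₁ = δ, q₂ = v, q₃ = sin ∘ δ, q₄ = cos ∘ δ (componentwise). Then for every t: (i) q₁ has derivative q₂(t) at t; (ii) q₃ has derivative q₂(t) ∘ q₄(t) at t; (iii) q₄ has derivative −q₂(t) ∘ q₃(t) at t; and (iv) M·a(t) = −D·q₂(t) + Z·(q₃(t) ⊗ q₄(t)) + Ψ·(q₄(t) ⊗ q₄(t)) + Ψ·(q₃(t) ⊗ q₃(t)) + u(t) • ℬ. In other words, the second-order nonlinear power network dynamics lift exactly to a quadratic system in (q₁, q₂, q₃, q₄). -/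
/-!
Expanding `sin (δᵢ - δⱼ - γᵢⱼ)` by the angle-subtraction formulas writes each coupling term as
`cos γᵢⱼ (sin δᵢ cos δⱼ - cos δᵢ sin δⱼ) - sin γᵢⱼ (cos δᵢ cos δⱼ + sin δᵢ sin δⱼ)`, which is
bilinear in `sin δ` and `cos δ`. The matrices `Z` and `Ψ` place the term of the pair `(k, j)` at
both endpoints `j` and `k`; by the symmetry of `K` and `γ` the two contributions that land on
row `i` add up to exactly `-f(δ)ᵢ`.
-/

open Matrix

noncomputable section

open Finset Real

theorem HasDerivAt.pi_sin {ι : Type*} [Fintype ι] {f : ℝ → ι → ℝ} {f' : ι → ℝ} {t : ℝ}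
    (hf : HasDerivAt f f' t) :
    HasDerivAt (fun s i => Real.sin (f s i)) (fun i => f' i * Real.cos (f t i)) t :=
  hasDerivAt_pi.2 fun i => by simpa only [mul_comm] using (hasDerivAt_pi.1 hf i).sin

theorem HasDerivAt.pi_cos {ι : Type*} [Fintype ι] {f : ℝ → ι → ℝ} {f' : ι → ℝ} {t : ℝ}
    (hf : HasDerivAt f f' t) :
    HasDerivAt (fun s i => Real.cos (f s i)) (fun i => -(f' i * Real.sin (f t i))) t :=
  hasDerivAt_pi.2 fun i => by simpa only [mul_comm, mul_neg] using (hasDerivAt_pi.1 hf i).cos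

section Lifting

variable {n : ℕ} (K γ : Fin n → Fin n → ℝ)

theorem Zmat_apply (i k j : Fin n) :
    Zmat K γ i (k, j) = ((if i = j then 1 else 0) - (if i = k then 1 else 0)) *
      (if j ≠ k then K k j * cos (γ k j) else 0) := by
  simp only [Zmat, of_apply]
  by_cases hij : i = j <;> by_cases hik : i = k <;> by_cases hjk : j = k <;> simp_all

theorem Psimat_apply (i k j : Fin n) :
    Psimat K γ i (k, j) = ((if i = j then 1 else 0) + (if i = k then 1 else 0)) *
      (if j ≠ k then 1 / 2 * K k j * sin (γ k j) else 0) := by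
  simp only [Psimat, of_apply]
  by_cases hij : i = j <;> by_cases hik : i = k <;> by_cases hjk : j = k <;> simp_all

theorem Zmat_mulVec_kron (A B : Fin n → ℝ) (i : Fin n) :
    (Zmat K γ *ᵥ kron A B) i = ∑ j ∈ univ.filter (· ≠ i), K j i * cos (γ j i) * A j * B i
      - ∑ j ∈ univ.filter (· ≠ i), K i j * cos (γ i j) * A i * B j := by
  rw [mulVec, dotProduct, Fintype.sum_prod_type]
  simp only [Zmat_apply, kron, sub_mul, ite_mul, one_mul, zero_mul, Finset.sum_sub_distrib,
    sum_ite_irrel, sum_const_zero, sum_ite_eq, mem_univ, if_true, sum_filter]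
  congr 1 <;> refine sum_congr rfl fun j _ => ?_ <;> simp only [ne_comm] <;> split_ifs <;> ring

theorem Psimat_mulVec_kron (A B : Fin n → ℝ) (i : Fin n) :
    (Psimat K γ *ᵥ kron A B) i = ∑ j ∈ univ.filter (· ≠ i), 1 / 2 * K j i * sin (γ j i) * A j * B i
      + ∑ j ∈ univ.filter (· ≠ i), 1 / 2 * K i j * sin (γ i j) * A i * B j := by
  rw [mulVec, dotProduct, Fintype.sum_prod_type]
  simp only [Psimat_apply, kron, add_mul, ite_mul, one_mul, zero_mul, sum_add_distrib,
    sum_ite_irrel, sum_const_zero, sum_ite_eq, mem_univ, if_true, sum_filter]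
  congr 1 <;> refine sum_congr rfl fun j _ => ?_ <;> simp only [ne_comm] <;> split_ifs <;> ring

variable {K γ} in
theorem Zmat_add_Psimat_mulVec_kron_eq_neg_powf (hK : ∀ i j, K i j = K j i)
    (hγ : ∀ i j, γ i j = γ j i) (x : Fin n → ℝ) :
    Zmat K γ *ᵥ kron (fun i => sin (x i)) (fun i => cos (x i))
      + Psimat K γ *ᵥ kron (fun i => cos (x i)) (fun i => cos (x i))
      + Psimat K γ *ᵥ kron (fun i => sin (x i)) (fun i => sin (x i)) = -powf K γ x := by
  funext i
  simp only [Pi.add_apply, Pi.neg_apply, Zmat_mulVec_kron, Psimat_mulVec_kron, powf,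
    ← Finset.sum_sub_distrib, ← sum_add_distrib, ← sum_neg_distrib]
  refine sum_congr rfl fun j _ => ?_
  rw [hK j i, hγ j i, sin_sub, sin_sub, cos_sub]
  ring

end Lifting

theorem exact_quadratic_lifting_general (n : ℕ)
    (M D : Matrix (Fin n) (Fin n) ℝ) (ℬ : Fin n → ℝ)
    (K γ : Fin n → Fin n → ℝ)
    (hK : ∀ i j, K i j = K j i) (hγ : ∀ i j, γ i j = γ j i)
    (δ v a : ℝ → Fin n → ℝ) (u : ℝ → ℝ)
    (hδ : ∀ t, HasDerivAt δ (v t) t)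
    (hdyn : ∀ t, M.mulVec (a t) + D.mulVec (v t) + powf K γ (δ t) = u t • ℬ)
    (t : ℝ) :
    HasDerivAt δ (v t) t ∧
    HasDerivAt (fun s => fun i => Real.sin (δ s i))
      (fun i => v t i * Real.cos (δ t i)) t ∧
    HasDerivAt (fun s => fun i => Real.cos (δ s i))
      (fun i => -(v t i * Real.sin (δ t i))) t ∧
    M.mulVec (a t) =
      -(D.mulVec (v t))
      + (Zmat K γ).mulVec (kron (fun i => Real.sin (δ t i)) (fun i => Real.cos (δ t i)))
      + (Psimat K γ).mulVec (kron (fun i => Real.cos (δ t i)) (fun i => Real.cos (δ t i)))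
      + (Psimat K γ).mulVec (kron (fun i => Real.sin (δ t i)) (fun i => Real.sin (δ t i)))
      + u t • ℬ := by
  refine ⟨hδ t, (hδ t).pi_sin, (hδ t).pi_cos, ?_⟩
  linear_combination hdyn t - Zmat_add_Psimat_mulVec_kron_eq_neg_powf hK hγ (δ t)

/-- Lemma 1: exact quadratic lifting of trajectories of the
second-order nonlinear power network dynamics. -/
theorem exact_quadratic_lifting (n : ℕ) (hn : 1 ≤ n)
    (M D : Matrix (Fin n) (Fin n) ℝ) (ℬ : Fin n → ℝ)
    (K γ : Fin n → Fin n → ℝ)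
    (hK : ∀ i j, K i j = K j i) (hγ : ∀ i j, γ i j = γ j i)
    (δ v a : ℝ → Fin n → ℝ) (u : ℝ → ℝ)
    (hδ : ∀ t, HasDerivAt δ (v t) t)
    (hv : ∀ t, HasDerivAt v (a t) t)
    (hdyn : ∀ t, M.mulVec (a t) + D.mulVec (v t) + powf K γ (δ t) = u t • ℬ)
    (t : ℝ) :
    HasDerivAt δ (v t) t ∧
    HasDerivAt (fun s => fun i => Real.sin (δ s i))
      (fun i => v t i * Real.cos (δ t i)) t ∧
    HasDerivAt (fun s => fun i => Real.cos (δ s i))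
      (fun i => -(v t i * Real.sin (δ t i))) t ∧
    M.mulVec (a t) =
      -(D.mulVec (v t))
      + (Zmat K γ).mulVec (kron (fun i => Real.sin (δ t i)) (fun i => Real.cos (δ t i)))
      + (Psimat K γ).mulVec (kron (fun i => Real.cos (δ t i)) (fun i => Real.cos (δ t i)))
      + (Psimat K γ).mulVec (kron (fun i => Real.sin (δ t i)) (fun i => Real.sin (δ t i)))
      + u t • ℬ :=
  exact_quadratic_lifting_general n M D ℬ K γ hK hγ δ v a u hδ hdyn t
end
end

section
/- Forward equilibrium lifting: Suppose K and γ are symmetric (K i j = K j i, γ i j = γ j i) and f(δ*) = ℬ for some δ* : Fin n → ℝ. Then the lifted point q* = (δ*, 0, sin δ*, cos δ*) (sin, cos componentwise) is an equilibrium of the lifted quadratic dynamics, i.e. with q₁ = δ*, q₂ = 0, q₃ = sin δ*, q₄ = cos δ*, all four blocks of the lifted vector field vanish: q₂ = 0; −D·q₂ + Z·(q₃ ⊗ q₄) + Ψ·(q₄ ⊗ q₄) + Ψ·(q₃ ⊗ q₃) + ℬ = 0; q₂ ∘ q₄ = 0; and −q₂ ∘ q₃ = 0. -/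
open Matrix

noncomputable section

lemma sum_pair_aux {n : ℕ} (i : Fin n) (A B : Fin n → ℝ) :
    (∑ p : Fin n × Fin n,
      (if i = p.2 ∧ p.2 ≠ p.1 then A p.1 else if i = p.1 ∧ p.2 ≠ p.1 then B p.2 else 0))
    = ∑ k ∈ Finset.univ.filter (fun k => k ≠ i), (A k + B k) := by
  have split : ∀ p : Fin n × Fin n,
      (if i = p.2 ∧ p.2 ≠ p.1 then A p.1 else if i = p.1 ∧ p.2 ≠ p.1 then B p.2 else 0)
      = (if i = p.2 ∧ p.2 ≠ p.1 then A p.1 else 0)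
        + (if i = p.1 ∧ p.2 ≠ p.1 then B p.2 else 0) := by
    intro p
    by_cases h1 : i = p.2 ∧ p.2 ≠ p.1
    · have h2 : ¬ (i = p.1 ∧ p.2 ≠ p.1) := by
        rintro ⟨rfl, hne⟩; exact hne (h1.1.symm)
      simp [h1, h2]
    · by_cases h2 : i = p.1 ∧ p.2 ≠ p.1
      · have h3 : p.1 ≠ p.2 := fun h => h2.2 h.symm
        simp [h1, h2, h3]
      · simp [h1, h2]
  rw [Finset.sum_congr rfl (fun p _ => split p), Finset.sum_add_distrib]
  rw [Fintype.sum_prod_type, Fintype.sum_prod_type]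
  have e1 : (∑ k : Fin n, ∑ j : Fin n, (if i = j ∧ j ≠ k then A k else 0))
      = ∑ k ∈ Finset.univ.filter (fun k => k ≠ i), A k := by
    rw [Finset.sum_filter]
    refine Finset.sum_congr rfl fun k _ => ?_
    simp only [ite_and]
    rw [Finset.sum_ite_eq Finset.univ i fun j => if j ≠ k then A k else 0]
    simp [ne_comm]
  have e2 : (∑ k : Fin n, ∑ j : Fin n, (if i = k ∧ j ≠ k then B j else 0))
      = ∑ k ∈ Finset.univ.filter (fun k => k ≠ i), B k := by
    have : ∀ k : Fin n, (∑ j : Fin n, (if i = k ∧ j ≠ k then B j else 0))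
        = if i = k then (∑ j ∈ Finset.univ.filter (fun j => j ≠ i), B j) else 0 := by
      intro k
      by_cases h : i = k
      · subst h
        simp [Finset.sum_filter]
      · simp [h]
    rw [Finset.sum_congr rfl fun k _ => this k]
    rw [Finset.sum_ite_eq Finset.univ i fun _ => ∑ j ∈ Finset.univ.filter (fun j => j ≠ i), B j]
    simp
  rw [e1, e2, ← Finset.sum_add_distrib]

/-- forward equilibrium lifting: an equilibrium of the original
dynamics lifts to an equilibrium of the quadratic dynamics. -/
theorem forward_equilibrium_lifting (n : ℕ) (hn : 1 ≤ n)
    (D : Matrix (Fin n) (Fin n) ℝ) (ℬ : Fin n → ℝ)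
    (K γ : Fin n → Fin n → ℝ)
    (hK : ∀ i j, K i j = K j i) (hγ : ∀ i j, γ i j = γ j i)
    (δstar : Fin n → ℝ) (heq : powf K γ δstar = ℬ)
    (q₂ q₃ q₄ : Fin n → ℝ)
    (hq₂ : q₂ = 0)
    (hq₃ : q₃ = fun i => Real.sin (δstar i))
    (hq₄ : q₄ = fun i => Real.cos (δstar i)) :
    q₂ = 0 ∧
    -(D.mulVec q₂) + (Zmat K γ).mulVec (kron q₃ q₄)
      + (Psimat K γ).mulVec (kron q₄ q₄) + (Psimat K γ).mulVec (kron q₃ q₃) + ℬ = 0 ∧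
    (fun i => q₂ i * q₄ i) = 0 ∧
    (fun i => -(q₂ i * q₃ i)) = 0 := by
  subst hq₂ hq₃ hq₄
  refine ⟨rfl, ?_, by funext i; simp, by funext i; simp⟩
  funext i
  have hZ : (Zmat K γ).mulVec (kron (fun i => Real.sin (δstar i)) (fun i => Real.cos (δstar i))) i
      = ∑ k ∈ Finset.univ.filter (fun k => k ≠ i),
          ((K k i * Real.cos (γ k i)) * (Real.sin (δstar k) * Real.cos (δstar i))
           + (-(K i k * Real.cos (γ i k))) * (Real.sin (δstar i) * Real.cos (δstar k))) := by
    rw [← sum_pair_aux]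
    simp only [Matrix.mulVec, dotProduct, Zmat, kron, Matrix.of_apply]
    refine Finset.sum_congr rfl fun p _ => ?_
    by_cases h1 : i = p.2 ∧ p.2 ≠ p.1
    · obtain ⟨he, hne⟩ := h1
      subst he
      simp [hne]
    · by_cases h2 : i = p.1 ∧ p.2 ≠ p.1
      · obtain ⟨he, hne⟩ := h2
        subst he
        have h12 : ¬ p.1 = p.2 := fun h => hne h.symm
        simp [h1, hne, h12]
      · simp [h1, h2]
  have hP : ∀ w : Fin n → ℝ,
      (Psimat K γ).mulVec (kron w w) i
      = ∑ k ∈ Finset.univ.filter (fun k => k ≠ i),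
          (((1/2 : ℝ) * K k i * Real.sin (γ k i)) * (w k * w i)
           + ((1/2 : ℝ) * K i k * Real.sin (γ i k)) * (w i * w k)) := by
    intro w
    rw [← sum_pair_aux i (fun k => ((1/2 : ℝ) * K k i * Real.sin (γ k i)) * (w k * w i))
        (fun k => ((1/2 : ℝ) * K i k * Real.sin (γ i k)) * (w i * w k))]
    simp only [Matrix.mulVec, dotProduct, Psimat, kron, Matrix.of_apply]
    refine Finset.sum_congr rfl fun p _ => ?_
    by_cases h1 : i = p.2 ∧ p.2 ≠ p.1
    · obtain ⟨he, hne⟩ := h1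
      subst he
      have h2 : ¬ (p.2 = p.1 ∧ p.2 ≠ p.1) := by rintro ⟨h, h'⟩; exact h' h
      simp [hne, h2]
    · by_cases h2 : i = p.1 ∧ p.2 ≠ p.1
      · obtain ⟨he, hne⟩ := h2
        subst he
        have h12 : ¬ p.1 = p.2 := fun h => hne h.symm
        simp [h1, hne, h12]
      · simp [h1, h2]
  have hB : ℬ i = ∑ j ∈ Finset.univ.filter (fun j => j ≠ i),
      K i j * Real.sin (δstar i - δstar j - γ i j) := by
    rw [← heq]; rfl
  simp only [Pi.add_apply, Pi.neg_apply, Pi.zero_apply, Matrix.mulVec_zero, neg_zero, zero_add]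
  rw [hZ, hP, hP, hB, ← Finset.sum_add_distrib, ← Finset.sum_add_distrib, ← Finset.sum_add_distrib]
  apply Finset.sum_eq_zero
  intro k hk
  rw [hK k i, hγ k i, Real.sin_sub (δstar i - δstar k), Real.sin_sub, Real.cos_sub]
  ring
end
end

section
/- Backward equilibrium lifting: Suppose K and γ are symmetric (K i j = K j i, γ i j = γ j i). Let q₁, q₂ : Fin n → ℝ and set q₃ = sin q₁, q₄ = cos q₁ (componentwise). If the lifted vector field vanishes at (q₁, q₂, q₃, q₄), i.e. q₂ = 0 and −D·q₂ + Z·(q₃ ⊗ q₄) + Ψ·(q₄ ⊗ q₄) + Ψ·(q₃ ⊗ q₃) + ℬ = 0, then f(q₁) = ℬ; that is, (q₁, 0) is an equilibrium of the original second-order power network dynamics. -/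
open Matrix

noncomputable section

/-- backward equilibrium lifting: if the lifted vector field vanishes
at `(q₁, q₂, sin q₁, cos q₁)`, then `(q₁, 0)` is an equilibrium of the original
second-order power network dynamics, i.e. `f(q₁) = ℬ`. -/
theorem backward_equilibrium_lifting (n : ℕ) (hn : 1 ≤ n)
    (D : Matrix (Fin n) (Fin n) ℝ) (ℬ : Fin n → ℝ)
    (K γ : Fin n → Fin n → ℝ)
    (hK : ∀ i j, K i j = K j i) (hγ : ∀ i j, γ i j = γ j i)
    (q₁ q₂ q₃ q₄ : Fin n → ℝ)
    (hq₃ : q₃ = fun i => Real.sin (q₁ i))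
    (hq₄ : q₄ = fun i => Real.cos (q₁ i))
    (hq₂ : q₂ = 0)
    (hblock2 : -(D.mulVec q₂) + (Zmat K γ).mulVec (kron q₃ q₄)
      + (Psimat K γ).mulVec (kron q₄ q₄) + (Psimat K γ).mulVec (kron q₃ q₃) + ℬ = 0) :
    powf K γ q₁ = ℬ := by
  subst hq₂ hq₃ hq₄
  funext i
  have h := congrFun hblock2 i
  simp only [Matrix.mulVec_zero, Pi.add_apply, Pi.neg_apply, Pi.zero_apply, neg_zero,
    zero_add] at h
  set A : Fin n → ℝ := fun k => K i k * Real.cos (γ i k) * Real.sin (q₁ k) * Real.cos (q₁ i)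
    + (1/2 : ℝ) * K i k * Real.sin (γ i k) *
      (Real.cos (q₁ k) * Real.cos (q₁ i) + Real.sin (q₁ k) * Real.sin (q₁ i)) with hA
  set B : Fin n → ℝ := fun j => -(K i j * Real.cos (γ i j)) * Real.sin (q₁ i) * Real.cos (q₁ j)
    + (1/2 : ℝ) * K i j * Real.sin (γ i j) *
      (Real.cos (q₁ i) * Real.cos (q₁ j) + Real.sin (q₁ i) * Real.sin (q₁ j)) with hB
  have key : (Zmat K γ).mulVec (kron (fun i => Real.sin (q₁ i)) (fun i => Real.cos (q₁ i))) i
      + (Psimat K γ).mulVec (kron (fun i => Real.cos (q₁ i)) (fun i => Real.cos (q₁ i))) i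
      + (Psimat K γ).mulVec (kron (fun i => Real.sin (q₁ i)) (fun i => Real.sin (q₁ i))) i
      = - powf K γ q₁ i := by
    simp only [Matrix.mulVec, dotProduct, Zmat, Psimat, kron, Matrix.of_apply]
    rw [← Finset.sum_add_distrib, ← Finset.sum_add_distrib]
    have hterm : ∀ p : Fin n × Fin n,
        ((if i = p.2 ∧ p.2 ≠ p.1 then K p.1 p.2 * Real.cos (γ p.1 p.2)
          else if i = p.1 ∧ p.2 ≠ p.1 then -(K p.1 p.2 * Real.cos (γ p.1 p.2)) else 0)
            * (Real.sin (q₁ p.1) * Real.cos (q₁ p.2))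
        + (if (i = p.2 ∧ p.2 ≠ p.1) ∨ (i = p.1 ∧ p.2 ≠ p.1)
            then (1/2 : ℝ) * K p.1 p.2 * Real.sin (γ p.1 p.2) else 0)
            * (Real.cos (q₁ p.1) * Real.cos (q₁ p.2))
        + (if (i = p.2 ∧ p.2 ≠ p.1) ∨ (i = p.1 ∧ p.2 ≠ p.1)
            then (1/2 : ℝ) * K p.1 p.2 * Real.sin (γ p.1 p.2) else 0)
            * (Real.sin (q₁ p.1) * Real.sin (q₁ p.2)))
        = (if p.2 = i ∧ ¬ p.1 = i then A p.1 else 0)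
          + (if p.1 = i ∧ ¬ p.2 = i then B p.2 else 0) := by
      rintro ⟨k, j⟩
      by_cases h1 : j = i <;> by_cases h2 : k = i
      · simp [h1, h2]
      · have hik : i ≠ k := fun h => h2 h.symm
        simp only [h1, hA]
        rw [hK k i, hγ k i]
        simp [hik, h2]
        ring
      · have hij : i ≠ j := fun h => h1 h.symm
        simp only [h2, hB]
        simp [hij, h1]
        ring
      · have hij : i ≠ j := fun h => h1 h.symm
        have hik : i ≠ k := fun h => h2 h.symm
        simp [hij, hik, h1, h2]
    rw [Finset.sum_congr rfl (fun p _ => hterm p)]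
    rw [Finset.sum_add_distrib]
    rw [Fintype.sum_prod_type, Fintype.sum_prod_type]
    have e1 : ∀ k : Fin n, (∑ j : Fin n, if j = i ∧ ¬ k = i then A k else 0)
        = if k = i then 0 else A k := by
      intro k
      by_cases hk : k = i
      · simp [hk]
      · simp [hk, Finset.sum_ite_eq']
    have e2 : ∀ k : Fin n, (∑ j : Fin n, if k = i ∧ ¬ j = i then B j else 0)
        = if k = i then ∑ j ∈ Finset.univ.filter (fun j => j ≠ i), B j else 0 := by
      intro k
      by_cases hk : k = i
      · simp [hk, Finset.sum_ite, Finset.filter_ne']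
      · simp [hk]
    simp only [e1, e2]
    rw [Finset.sum_ite_eq' Finset.univ i (fun _ => ∑ j ∈ Finset.univ.filter (fun j => j ≠ i), B j)]
    simp only [Finset.mem_univ, if_true]
    have eA : (∑ x : Fin n, if x = i then 0 else A x)
        = ∑ j ∈ Finset.univ.filter (fun j => j ≠ i), A j := by
      rw [Finset.sum_filter]
      exact Finset.sum_congr rfl fun x _ => by by_cases hx : x = i <;> simp [hx]
    rw [eA, ← Finset.sum_add_distrib]
    show _ = -∑ j ∈ Finset.univ.filter (fun j => j ≠ i), K i j * Real.sin (q₁ i - q₁ j - γ i j)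
    rw [← Finset.sum_neg_distrib]
    refine Finset.sum_congr rfl fun j hj => ?_
    simp only [hA, hB]
    simp [Real.sin_sub, Real.cos_sub]
    ring
  rw [key] at h
  linarith
end
end

section
/- Symmetry of the quadratic term of the lifted power network dynamics (Lemma: the tensor H is symmetric): if K and γ are symmetric (K i j = K j i, γ i j = γ j i), then the bilinear map B with four blocks B(u, v)₁ = 0, B(u, v)₂ = Ψ·(u₃ ⊗ v₃) + Ψ·(u₄ ⊗ v₄) + (1/2)·Z·(u₃ ⊗ v₄) − (1/2)·Z·(u₄ ⊗ v₃), B(u, v)₃ = (1/2)·(u₂ ∘ v₄ + u₄ ∘ v₂), B(u, v)₄ = −(1/2)·(u₂ ∘ v₃ + u₃ ∘ v₂), defined for u = (u₁, u₂, u₃, u₄) and v = (v₁, v₂, v₃, v₄) with each block in Fin n → ℝ, satisfies B(u, v) = B(v, u) for all u, v. -/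
open Matrix

noncomputable section

/-- The lifted state space: four blocks `(q₁, q₂, q₃, q₄)`. -/
abbrev Quad (n : ℕ) := (Fin n → ℝ) × (Fin n → ℝ) × (Fin n → ℝ) × (Fin n → ℝ)

/-- The symmetrized bilinear map encoding the quadratic (Kronecker) term
`H(u ⊗ v)` of the lifted quadratic representation of the power network. -/
def Bmap {n : ℕ} (K γ : Fin n → Fin n → ℝ) (u v : Quad n) : Quad n :=
  (0,
   (Psimat K γ).mulVec (kron u.2.2.1 v.2.2.1) + (Psimat K γ).mulVec (kron u.2.2.2 v.2.2.2)
     + (1/2 : ℝ) • (Zmat K γ).mulVec (kron u.2.2.1 v.2.2.2)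
     - (1/2 : ℝ) • (Zmat K γ).mulVec (kron u.2.2.2 v.2.2.1),
   (1/2 : ℝ) • fun i => u.2.1 i * v.2.2.2 i + u.2.2.2 i * v.2.1 i,
   -((1/2 : ℝ) • fun i => u.2.1 i * v.2.2.1 i + u.2.2.1 i * v.2.1 i))


lemma psi_swap {n : ℕ} (K γ : Fin n → Fin n → ℝ) (hK : ∀ i j, K i j = K j i)
    (hγ : ∀ i j, γ i j = γ j i) (i j k : Fin n) :
    Psimat K γ i (j, k) = Psimat K γ i (k, j) := by
  simp only [Psimat, Matrix.of_apply]
  rw [hK j k, hγ j k]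
  refine if_congr ?_ rfl rfl
  constructor <;> rintro (⟨h1, h2⟩ | ⟨h1, h2⟩)
  · exact Or.inr ⟨h1, h2.symm⟩
  · exact Or.inl ⟨h1, h2.symm⟩
  · exact Or.inr ⟨h1, h2.symm⟩
  · exact Or.inl ⟨h1, h2.symm⟩

lemma z_swap {n : ℕ} (K γ : Fin n → Fin n → ℝ) (hK : ∀ i j, K i j = K j i)
    (hγ : ∀ i j, γ i j = γ j i) (i j k : Fin n) :
    Zmat K γ i (j, k) = -Zmat K γ i (k, j) := by
  simp only [Zmat, Matrix.of_apply]
  rw [hK j k, hγ j k]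
  by_cases h1 : i = k <;> by_cases h2 : i = j <;> by_cases h3 : j = k <;>
    simp_all [Ne.symm, h3]

lemma psi_mulVec_swap {n : ℕ} (K γ : Fin n → Fin n → ℝ) (hK : ∀ i j, K i j = K j i)
    (hγ : ∀ i j, γ i j = γ j i) (a b : Fin n → ℝ) :
    (Psimat K γ).mulVec (kron a b) = (Psimat K γ).mulVec (kron b a) := by
  funext i
  simp only [Matrix.mulVec, dotProduct, kron]
  rw [← Equiv.sum_comp (Equiv.prodComm (Fin n) (Fin n)) _]
  refine Finset.sum_congr rfl fun p _ => ?_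
  simp only [Equiv.prodComm_apply, Prod.swap]
  rw [psi_swap K γ hK hγ i p.2 p.1, mul_comm (a p.2) (b p.1)]

lemma z_mulVec_swap {n : ℕ} (K γ : Fin n → Fin n → ℝ) (hK : ∀ i j, K i j = K j i)
    (hγ : ∀ i j, γ i j = γ j i) (a b : Fin n → ℝ) :
    (Zmat K γ).mulVec (kron a b) = -(Zmat K γ).mulVec (kron b a) := by
  funext i
  simp only [Matrix.mulVec, dotProduct, kron, Pi.neg_apply, ← Finset.sum_neg_distrib]
  rw [← Equiv.sum_comp (Equiv.prodComm (Fin n) (Fin n)) _]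
  refine Finset.sum_congr rfl fun p _ => ?_
  simp only [Equiv.prodComm_apply, Prod.swap]
  rw [z_swap K γ hK hγ i p.2 p.1, mul_comm (a p.2) (b p.1)]
  ring

/-- symmetry of the quadratic term of the lifted power network
dynamics (the tensor `H` is symmetric): `B(u, v) = B(v, u)`. -/
theorem Bmap_symmetric (n : ℕ) (hn : 1 ≤ n) (K γ : Fin n → Fin n → ℝ)
    (hK : ∀ i j, K i j = K j i) (hγ : ∀ i j, γ i j = γ j i)
    (u v : Quad n) :
    Bmap K γ u v = Bmap K γ v u := by
  unfold Bmap
  refine Prod.ext rfl (Prod.ext ?_ (Prod.ext ?_ ?_))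
  · simp only
    rw [psi_mulVec_swap K γ hK hγ u.2.2.1 v.2.2.1, psi_mulVec_swap K γ hK hγ u.2.2.2 v.2.2.2,
        z_mulVec_swap K γ hK hγ u.2.2.1 v.2.2.2, z_mulVec_swap K γ hK hγ u.2.2.2 v.2.2.1]
    module
  · funext i; simp only [Pi.smul_apply, smul_eq_mul]; ring
  · funext i; simp only [Pi.neg_apply, Pi.smul_apply, smul_eq_mul]; ring
end
end
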